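/- arXiv:1312.1597 — 2 statements merged into one kernel-verified Lean document; each statement's English description precedes it below -/
import Mathlib

section
/- The discriminant of the quadratic (in c) polynomial M(c,s) = 243c² + (−900s − 778 + 540s² − 1080s³)·c + 823 + 1284s + 480s² + 480s³ + 2700s⁴ − 1296s⁵ + 1296s⁶ equals −16·(18s² − 6s + 23)³, which is strictly negative for all real s. -/
lemma eighteen_sq_sub_six_add_twentyThree_pos (s : ℝ) : 0 < 18*s^2 - 6*s + 23 := by
  have h : 18*s^2 - 6*s + 23 = (6*s - 1)^2 / 2 + 45 / 2 := by ring
  rw [h]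
  positivity

/-- The discriminant (in `c`) of `M(c,s)` equals `−16(18s² − 6s + 23)³`, which is
strictly negative for all real `s`. -/
theorem discriminant_M (s : ℝ) :
    (-900*s - 778 + 540*s^2 - 1080*s^3)^2
        - 4 * 243 * (823 + 1284*s + 480*s^2 + 480*s^3 + 2700*s^4 - 1296*s^5 + 1296*s^6)
      = -16 * (18*s^2 - 6*s + 23)^3 ∧
    -16 * (18*s^2 - 6*s + 23)^3 < 0 :=
  ⟨by ring,
    mul_neg_of_neg_of_pos (by norm_num) (pow_pos (eighteen_sq_sub_six_add_twentyThree_pos s) 3)⟩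
end

section
/- For every fixed s ∈ ℝ, the cubic polynomial in c, N(c,s) = 3c³ + (−42s + 37)c² + (−476s + 588s² + 3397)c + 6076s² − 8232s³ − 8666s − 2125, has exactly one real root. -/
/-!
As a cubic in `c`, `N` has derivative `9c² + 2(37 − 42s)c + (588s² − 476s + 3397)`, whose
discriminant is negative for every `s`: `9 (588s² − 476s + 3397) − (37 − 42s)² =
3528s² − 1176s + 29204 > 0`. So the slope of `N` is bounded below by a positive constant, and `N`
is a strictly increasing bijection of `ℝ`.
-/

theorem bijective_of_pos_le_deriv {f : ℝ → ℝ} {m : ℝ} (hm : 0 < m) (hf : Differentiable ℝ f)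
    (hf' : ∀ x, m ≤ deriv f x) : Function.Bijective f := by
  refine ⟨(strictMono_of_deriv_pos fun x => hm.trans_le (hf' x)).injective, fun y => ?_⟩
  set r := |y - f 0| / m
  have hr : 0 ≤ r := by positivity
  have hmr : m * r = |y - f 0| := mul_div_cancel₀ _ hm.ne'
  have hgrowth := mul_sub_le_image_sub_of_le_deriv hf hf'
  have hlow : f (-r) ≤ y := by
    have := hgrowth (neg_nonpos.2 hr)
    linarith [le_abs_self (f 0 - y), abs_sub_comm y (f 0)]
  have hhigh : y ≤ f r := by
    have := hgrowth hr
    linarith [le_abs_self (y - f 0)]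
  obtain ⟨x, -, hx⟩ := intermediate_value_Icc (by linarith) hf.continuous.continuousOn ⟨hlow, hhigh⟩
  exact ⟨x, hx⟩

theorem hasDerivAt_cubic (a b c d x : ℝ) :
    HasDerivAt (fun x => a * x ^ 3 + b * x ^ 2 + c * x + d) (3 * a * x ^ 2 + 2 * b * x + c) x :=
  ((((hasDerivAt_pow 3 x).const_mul a).add ((hasDerivAt_pow 2 x).const_mul b)).add
    ((hasDerivAt_id' x).const_mul c)).add_const d |>.congr_deriv (by norm_num; ring)

theorem existsUnique_cubic_eq {a b c : ℝ} (ha : 0 < a) (hdisc : b ^ 2 < 3 * a * c) (d y : ℝ) :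
    ∃! x, a * x ^ 3 + b * x ^ 2 + c * x + d = y := by
  have hderiv x := (hasDerivAt_cubic a b c d x).deriv
  refine (bijective_of_pos_le_deriv (m := c - b ^ 2 / (3 * a)) ?_
    (fun x => (hasDerivAt_cubic a b c d x).differentiableAt) fun x => ?_).existsUnique y
  · rw [sub_pos, div_lt_iff₀ (by positivity)]
    linarith
  · -- `3a (3a x² + 2b x + c) = (3a x + b)² + (3ac − b²)`
    rw [hderiv, sub_le_comm, le_div_iff₀ (by positivity)]
    nlinarith [sq_nonneg (3 * a * x + b)]

theorem existsUnique_cubic_root {a b c : ℝ} (hdisc : b ^ 2 < 3 * a * c) (d : ℝ) :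
    ∃! x, a * x ^ 3 + b * x ^ 2 + c * x + d = 0 := by
  rcases lt_trichotomy a 0 with ha | rfl | ha
  · refine (existsUnique_congr fun x => ?_).2
      (existsUnique_cubic_eq (b := -b) (c := -c) (neg_pos.2 ha) (by linarith) (-d) 0)
    constructor <;> intro h <;> linarith
  · nlinarith [sq_nonneg b]
  · exact existsUnique_cubic_eq ha hdisc d 0

/-- For every fixed `s`, the cubic in `c`,
`N(c,s) = 3c³ + (−42s + 37)c² + (−476s + 588s² + 3397)c + 6076s² − 8232s³ − 8666s − 2125`,
has exactly one real root. -/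
theorem N_unique_root (s : ℝ) :
    ∃! c : ℝ,
      3*c^3 + (-42*s + 37)*c^2 + (-476*s + 588*s^2 + 3397)*c
        + 6076*s^2 - 8232*s^3 - 8666*s - 2125 = 0 := by
  have hdisc : (-42 * s + 37) ^ 2 < 3 * 3 * (-476 * s + 588 * s ^ 2 + 3397) := by
    nlinarith [sq_nonneg (6 * s - 1)]
  simpa only [add_sub_assoc] using
    existsUnique_cubic_root hdisc (6076 * s ^ 2 - 8232 * s ^ 3 - 8666 * s - 2125)
end
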